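/- (Global fluctuation bound for fast Fřlner sequences.) Let G be a locally compact second countable topological group with left Haar measure m, let B be a Banach space with a modulus of uniform convexity u, and let π : G → L(B,B) be a group homomorphism into bounded linear operators with ‖π(g)‖ ≤ 1 such that g ↦ π(g)x is strongly measurable for every x; set A_n x := (1/m(F_n)) ∫_{F_n} π(g⁻¹)x dm(g). Fix ε > 0, x ∈ B with 0 < ‖x‖ ≤ 1, η with 0 < η < u(ε)/2, and λ ∈ ℕ, λ ≥ 1. Suppose (F_n) is a (λ, η/(3‖x‖))-fast Fřlner sequence of compact subsets of positive finite Haar measure. Then every finite sequence of indices n_1 < n_2 < ⋯ < n_{k+1} with ‖A_{n_i} x − A_{n_{i+1}} x‖ ≥ ε for all 1 ≤ i ≤ k satisfies k ≤ λ·⌊2‖x‖/(u(ε) − 2η)⌋ + λ. -/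

import Mathlib

/-!
Write `A_n` for the averaging operator over `F_n`; it is a linear contraction. Since
`A_p (π g⁻¹ x)` is the average of `π h⁻¹ x` over `g F_p`, Fubini shows that `A_p A_q x` is an
average of vectors `A_p (π g⁻¹ x)`, and the fast Følner condition makes `A_p A_q x` lie within
`2η` of `A_p x` as soon as `p ≥ q + λ`. Applying `A_p` to the midpoint of an `ε`-fluctuation
`A_{n_i} x, A_{n_{i+1}} x`, uniform convexity shows that every later average `A_p x`,
`p ≥ n_{i+1} + λ`, has norm at least `δ = u(ε) - 2η` below the larger of the two. Hence the sums
`c_{tλ} + c_{(t+1)λ}` of the maxima `c_i = max ‖A_{n_i} x‖ ‖A_{n_{i+1}} x‖` decrease by `δ` at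
each step while staying in `(2δ, 2‖x‖]`, which bounds the length of the chain.
-/

open MeasureTheory Filter Pointwise

section SetIntegral

variable {α E : Type*} [MeasurableSpace α] [NormedAddCommGroup E] [NormedSpace ℝ E]
  {μ ν ρ : Measure α} {f : α → E} {C : ℝ}

theorem measureReal_le_mul_of_lt_ofReal_mul {s t : Set α} {θ : ℝ} (hθ : 0 ≤ θ) (ht : μ t ≠ ⊤)
    (h : μ s < ENNReal.ofReal θ * μ t) : μ.real s ≤ θ * μ.real t := by
  simpa only [measureReal_def, ENNReal.toReal_mul, ENNReal.toReal_ofReal hθ] using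
    ENNReal.toReal_mono (ENNReal.mul_ne_top ENNReal.ofReal_ne_top ht) h.le

theorem norm_integral_sub_integral_le_of_le [IsFiniteMeasure ν] (hρν : ρ ≤ ν)
    (hf : Integrable f ν) (hC : ∀ x, ‖f x‖ ≤ C) :
    ‖∫ x, f x ∂ν - ∫ x, f x ∂ρ‖ ≤ C * (ν.real Set.univ - ρ.real Set.univ) := by
  have : IsFiniteMeasure ρ := isFiniteMeasure_of_le ν hρν
  have hsplit : ∫ x, f x ∂ν = ∫ x, f x ∂(ν - ρ) + ∫ x, f x ∂ρ := by
    rw [← integral_add_measure (hf.mono_measure Measure.sub_le) (hf.mono_measure hρν),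
      Measure.sub_add_cancel_of_le hρν]
  have hmass : (ν - ρ).real Set.univ = ν.real Set.univ - ρ.real Set.univ := by
    simp only [measureReal_def, Measure.sub_apply MeasurableSet.univ hρν]
    exact ENNReal.toReal_sub_of_le (hρν _) (measure_ne_top _ _)
  rw [hsplit, add_sub_cancel_right, ← hmass]
  exact norm_integral_le_of_norm_le_const (Eventually.of_forall hC)

-- Neither `s` nor `t` is assumed measurable, hence the comparison of `μ.restrict (s ∩ t)` with
-- `μ.restrict s` through their difference measure instead of splitting `s` along `t`.
theorem norm_setIntegral_sub_setIntegral_inter_le {s t : Set α} (hs : μ s ≠ ⊤) (ht : μ t ≠ ⊤)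
    (hf : AEStronglyMeasurable f μ) (hC : ∀ x, ‖f x‖ ≤ C) :
    ‖∫ x in s, f x ∂μ - ∫ x in s ∩ t, f x ∂μ‖ ≤ C * μ.real (symmDiff s t) := by
  obtain hα | ⟨⟨a⟩⟩ := isEmpty_or_nonempty α
  · simp [Measure.eq_zero_of_isEmpty μ]
  have := Fact.mk hs.lt_top
  refine (norm_integral_sub_integral_le_of_le (Measure.restrict_mono Set.inter_subset_left le_rfl)
    ((integrable_const C).mono' hf.restrict (Eventually.of_forall hC)) hC).trans
    (mul_le_mul_of_nonneg_left ?_ ((norm_nonneg _).trans (hC a)))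
  rw [measureReal_restrict_apply_univ, measureReal_restrict_apply_univ, sub_le_iff_le_add']
  have hle : μ s ≤ μ (s ∩ t) + μ (symmDiff s t) :=
    (measure_le_inter_add_sdiff μ s t).trans (by gcongr; exact Set.subset_union_left)
  have hsymm : μ (symmDiff s t) ≠ ⊤ := measure_symmDiff_ne_top hs ht
  have hinter : μ (s ∩ t) ≠ ⊤ := measure_ne_top_of_subset Set.inter_subset_left hs
  simpa only [measureReal_def, ENNReal.toReal_add hinter hsymm] using
    ENNReal.toReal_mono (ENNReal.add_ne_top.2 ⟨hinter, hsymm⟩) hle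

theorem norm_setIntegral_sub_setIntegral_le {s t : Set α} (hs : μ s ≠ ⊤) (ht : μ t ≠ ⊤)
    (hf : AEStronglyMeasurable f μ) (hC : ∀ x, ‖f x‖ ≤ C) :
    ‖∫ x in s, f x ∂μ - ∫ x in t, f x ∂μ‖ ≤ 2 * C * μ.real (symmDiff s t) := by
  have hs' := norm_setIntegral_sub_setIntegral_inter_le hs ht hf hC
  have ht' := norm_setIntegral_sub_setIntegral_inter_le ht hs hf hC
  rw [Set.inter_comm, symmDiff_comm] at ht'
  rw [← sub_sub_sub_cancel_right _ _ (∫ x in s ∩ t, f x ∂μ)]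
  linarith [norm_sub_le (∫ x in s, f x ∂μ - ∫ x in s ∩ t, f x ∂μ)
    (∫ x in t, f x ∂μ - ∫ x in s ∩ t, f x ∂μ)]

theorem norm_setIntegral_le_of_norm_le_of_mem {s t : Set α} {c : ℝ} (hs : μ s ≠ ⊤)
    (ht : MeasurableSet t) (hf : IntegrableOn f s μ) (hc : 0 ≤ c) (hft : ∀ x ∈ t, ‖f x‖ ≤ c)
    (hC : ∀ x, ‖f x‖ ≤ C) :
    ‖∫ x in s, f x ∂μ‖ ≤ c * μ.real s + C * μ.real (s \ t) := by
  rw [← integral_inter_add_sdiff ht hf]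
  refine (norm_add_le _ _).trans (add_le_add ?_ ?_)
  · refine (norm_setIntegral_le_of_norm_le_const (measure_ne_top_of_subset
      Set.inter_subset_left hs).lt_top fun x hx => hft x hx.2).trans ?_
    gcongr
    exact Set.inter_subset_left
  · exact norm_setIntegral_le_of_norm_le_const
      (measure_ne_top_of_subset Set.sdiff_subset hs).lt_top fun x _ => hC x

end SetIntegral

section Representation

variable {G B : Type*} [Group G] [NormedAddCommGroup B] [NormedSpace ℝ B]

theorem norm_apply_le_of_norm_le_one {π : G →* (B →L[ℝ] B)} (hπ : ∀ g, ‖π g‖ ≤ 1) (g : G)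
    (y : B) : ‖π g y‖ ≤ ‖y‖ := by
  simpa using (π g).le_of_opNorm_le (hπ g) y

theorem inv_apply_inv_apply (π : G →* (B →L[ℝ] B)) (g h : G) (y : B) :
    π h⁻¹ (π g⁻¹ y) = π (g * h)⁻¹ y := by
  rw [mul_inv_rev, map_mul]
  rfl

variable [MeasurableSpace G]

noncomputable def ergodicAverage (μ : Measure G) (π : G →* (B →L[ℝ] B)) (F : Set G) (y : B) : B :=
  (μ F).toReal⁻¹ • ∫ g in F, π g⁻¹ y ∂μ

variable {μ : Measure G} {π : G →* (B →L[ℝ] B)} {F : Set G}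

theorem integrable_inv_apply [MeasurableInv G] {ν : Measure G} [IsFiniteMeasure ν]
    (hπ : ∀ g, ‖π g‖ ≤ 1) (hmeas : ∀ y : B, StronglyMeasurable fun g => π g y) (y : B) :
    Integrable (fun g => π g⁻¹ y) ν :=
  (integrable_const ‖y‖).mono' ((hmeas y).comp_measurable measurable_inv).aestronglyMeasurable
    (Eventually.of_forall fun g => norm_apply_le_of_norm_le_one hπ g⁻¹ y)

theorem norm_ergodicAverage_le (hπ : ∀ g, ‖π g‖ ≤ 1) (F : Set G) (y : B) :
    ‖ergodicAverage μ π F y‖ ≤ ‖y‖ := by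
  rcases eq_or_ne (μ F).toReal 0 with h0 | h0
  · simp [ergodicAverage, h0]
  have hF : μ F < ⊤ := (ENNReal.toReal_ne_zero.1 h0).2.lt_top
  rw [ergodicAverage, norm_smul, norm_inv, Real.norm_of_nonneg ENNReal.toReal_nonneg,
    inv_mul_le_iff₀ (lt_of_le_of_ne ENNReal.toReal_nonneg h0.symm), mul_comm]
  exact norm_setIntegral_le_of_norm_le_const hF fun g _ => norm_apply_le_of_norm_le_one hπ g⁻¹ y

theorem ergodicAverage_add [MeasurableInv G] (hπ : ∀ g, ‖π g‖ ≤ 1)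
    (hmeas : ∀ y : B, StronglyMeasurable fun g => π g y) (hF : μ F ≠ ⊤) (y z : B) :
    ergodicAverage μ π F (y + z) = ergodicAverage μ π F y + ergodicAverage μ π F z := by
  have := Fact.mk hF.lt_top
  simp only [ergodicAverage, map_add, ← smul_add]
  rw [integral_add (integrable_inv_apply hπ hmeas y) (integrable_inv_apply hπ hmeas z)]

theorem ergodicAverage_smul (F : Set G) (c : ℝ) (y : B) :
    ergodicAverage μ π F (c • y) = c • ergodicAverage μ π F y := by
  simp only [ergodicAverage, map_smul, integral_smul, smul_comm c]

theorem ergodicAverage_inv_apply [MeasurableMul G] [μ.IsMulLeftInvariant] (F : Set G) (g : G)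
    (y : B) : ergodicAverage μ π F (π g⁻¹ y) = ergodicAverage μ π (g • F) y := by
  simp only [ergodicAverage, inv_apply_inv_apply, measure_smul]
  rw [← Set.image_smul]
  exact congrArg _ ((measurePreserving_mul_left μ g).setIntegral_image_emb
    (measurableEmbedding_mulLeft g) (fun h => π h⁻¹ y) F).symm

theorem norm_ergodicAverage_inv_apply_sub_le [MeasurableMul G] [MeasurableInv G]
    [μ.IsMulLeftInvariant] (hπ : ∀ g, ‖π g‖ ≤ 1)
    (hmeas : ∀ y : B, StronglyMeasurable fun g => π g y) (hF : μ F ≠ ⊤) (g : G) (y : B) :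
    ‖ergodicAverage μ π F (π g⁻¹ y) - ergodicAverage μ π F y‖ ≤
      2 * ‖y‖ * μ.real (symmDiff F (g • F)) / μ.real F := by
  have hgF : μ (g • F) ≠ ⊤ := by rwa [measure_smul]
  rw [ergodicAverage_inv_apply, ergodicAverage, ergodicAverage, measure_smul, ← smul_sub,
    norm_smul, norm_inv, Real.norm_of_nonneg ENNReal.toReal_nonneg, symmDiff_comm,
    ← measureReal_def, div_eq_inv_mul]
  exact mul_le_mul_of_nonneg_left (norm_setIntegral_sub_setIntegral_le hgF hF
    ((hmeas y).comp_measurable measurable_inv).aestronglyMeasurable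
    fun h => norm_apply_le_of_norm_le_one hπ h⁻¹ y) (inv_nonneg.2 measureReal_nonneg)

theorem integrable_inv_mul_apply [MeasurableMul₂ G] [MeasurableInv G] {ν₁ ν₂ : Measure G}
    [IsFiniteMeasure ν₁] [IsFiniteMeasure ν₂] (hπ : ∀ g, ‖π g‖ ≤ 1)
    (hmeas : ∀ y : B, StronglyMeasurable fun g => π g y) (y : B) :
    Integrable (fun p : G × G => π (p.1 * p.2)⁻¹ y) (ν₁.prod ν₂) :=
  (integrable_const ‖y‖).mono'
    ((hmeas y).comp_measurable (measurable_fst.mul measurable_snd).inv).aestronglyMeasurable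
    (Eventually.of_forall fun _ => norm_apply_le_of_norm_le_one hπ _ y)

theorem ergodicAverage_ergodicAverage [MeasurableMul₂ G] [MeasurableInv G] [CompleteSpace B]
    {F₁ F₂ : Set G} (hπ : ∀ g, ‖π g‖ ≤ 1) (hmeas : ∀ y : B, StronglyMeasurable fun g => π g y)
    (hF₁ : μ F₁ ≠ ⊤) (hF₂ : μ F₂ ≠ ⊤) (y : B) :
    ergodicAverage μ π F₁ (ergodicAverage μ π F₂ y) =
      (μ F₂).toReal⁻¹ • ∫ g in F₂, ergodicAverage μ π F₁ (π g⁻¹ y) ∂μ := by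
  have := Fact.mk hF₁.lt_top
  have := Fact.mk hF₂.lt_top
  have hcomm : ∀ h : G, π h⁻¹ (∫ g in F₂, π g⁻¹ y ∂μ) = ∫ g in F₂, π (g * h)⁻¹ y ∂μ := fun h => by
    rw [← ContinuousLinearMap.integral_comp_comm _ (integrable_inv_apply hπ hmeas y)]
    simp only [inv_apply_inv_apply]
  simp only [ergodicAverage, map_smul, hcomm, inv_apply_inv_apply, integral_smul]
  rw [smul_comm, integral_integral_swap (f := fun g h : G => π (g * h)⁻¹ y)
    (integrable_inv_mul_apply (ν₁ := μ.restrict F₂) (ν₂ := μ.restrict F₁) hπ hmeas y)]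

theorem integrableOn_ergodicAverage_inv_apply [MeasurableMul₂ G] [MeasurableInv G]
    {F₁ F₂ : Set G} (hπ : ∀ g, ‖π g‖ ≤ 1) (hmeas : ∀ y : B, StronglyMeasurable fun g => π g y)
    (hF₁ : μ F₁ ≠ ⊤) (hF₂ : μ F₂ ≠ ⊤) (y : B) :
    IntegrableOn (fun g => ergodicAverage μ π F₁ (π g⁻¹ y)) F₂ μ := by
  have := Fact.mk hF₁.lt_top
  have := Fact.mk hF₂.lt_top
  simp only [ergodicAverage, inv_apply_inv_apply]
  exact ((integrable_inv_mul_apply hπ hmeas y).integral_prod_left).smul _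

theorem norm_ergodicAverage_ergodicAverage_sub_le [MeasurableMul₂ G] [MeasurableInv G]
    [μ.IsMulLeftInvariant] [CompleteSpace B] {F₁ F₂ F' : Set G} {θ : ℝ}
    (hπ : ∀ g, ‖π g‖ ≤ 1) (hmeas : ∀ y : B, StronglyMeasurable fun g => π g y)
    (hF₁ : μ F₁ ≠ ⊤) (hF₂ : μ F₂ ≠ ⊤) (hF₂₀ : μ F₂ ≠ 0) (hF' : MeasurableSet F') (hθ : 0 ≤ θ)
    (hbad : μ.real (F₂ \ F') ≤ θ * μ.real F₂)
    (hgood : ∀ g ∈ F', μ.real (symmDiff F₁ (g • F₁)) ≤ θ * μ.real F₁) (y : B) :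
    ‖ergodicAverage μ π F₁ (ergodicAverage μ π F₂ y) - ergodicAverage μ π F₁ y‖ ≤
      4 * θ * ‖y‖ := by
  have := Fact.mk hF₂.lt_top
  set φ := fun g => ergodicAverage μ π F₁ (π g⁻¹ y) - ergodicAverage μ π F₁ y
  have hF₂pos : 0 < μ.real F₂ := ENNReal.toReal_pos hF₂₀ hF₂
  have hint := integrableOn_ergodicAverage_inv_apply hπ hmeas hF₁ hF₂ y
  have hdiff : ergodicAverage μ π F₁ (ergodicAverage μ π F₂ y) - ergodicAverage μ π F₁ y =
      (μ.real F₂)⁻¹ • ∫ g in F₂, φ g ∂μ := by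
    rw [ergodicAverage_ergodicAverage hπ hmeas hF₁ hF₂, integral_sub hint (integrable_const _),
      setIntegral_const, smul_sub, smul_smul, inv_mul_cancel₀ hF₂pos.ne', one_smul]
    rfl
  have hφ_good : ∀ g ∈ F', ‖φ g‖ ≤ 2 * θ * ‖y‖ := fun g hg =>
    (norm_ergodicAverage_inv_apply_sub_le hπ hmeas hF₁ g y).trans <|
      div_le_of_le_mul₀ measureReal_nonneg (by positivity) <| by
        linarith [mul_le_mul_of_nonneg_left (hgood g hg) (by positivity : (0 : ℝ) ≤ 2 * ‖y‖)]
  have hφ_le : ∀ g, ‖φ g‖ ≤ 2 * ‖y‖ := fun g => (norm_sub_le _ _).trans <| by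
    have := (norm_ergodicAverage_le (μ := μ) hπ F₁ (π g⁻¹ y)).trans
      (norm_apply_le_of_norm_le_one hπ g⁻¹ y)
    linarith [norm_ergodicAverage_le (μ := μ) hπ F₁ y]
  have hφ_int := norm_setIntegral_le_of_norm_le_of_mem (f := φ) hF₂ hF'
    (hint.sub (integrable_const _)) (by positivity) hφ_good hφ_le
  rw [hdiff, norm_smul, norm_inv, Real.norm_of_nonneg hF₂pos.le, inv_mul_le_iff₀ hF₂pos]
  nlinarith [mul_le_mul_of_nonneg_left hbad (norm_nonneg y)]

end Representation

theorem sub_mul_le_of_forall_succ_le {s : ℕ → ℝ} {δ : ℝ} {n : ℕ}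
    (hs : ∀ t < n, s (t + 1) ≤ s t - δ) : s n ≤ s 0 - n * δ := by
  induction n with
  | zero => simp
  | succ n ih =>
    have := ih fun t ht => hs t (by omega)
    have := hs n (by omega)
    push_cast
    linarith

theorem add_sub_le_of_forall_lt_succ {f : ℕ → ℕ} {k : ℕ} (hf : ∀ i < k, f i < f (i + 1))
    {i j : ℕ} (hij : i ≤ j) (hjk : j ≤ k) : f i + (j - i) ≤ f j := by
  induction j, hij using Nat.le_induction with
  | base => simp
  | succ j hij ih =>
    have := ih (by omega)
    have := hf j (by omega)
    omega

theorem le_mul_floor_add_of_forall_lt_max_sub {a : ℕ → ℝ} {R δ : ℝ} {k lam : ℕ} (hδ : 0 < δ)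
    (hlam : 1 ≤ lam) (hR : ∀ i ≤ k, a i ≤ R) (hpos : ∀ i < k, δ < max (a i) (a (i + 1)))
    (hdrop : ∀ i < k, ∀ j ≤ k, i + 1 + lam ≤ j → a j < max (a i) (a (i + 1)) - δ) :
    k ≤ lam * ⌊2 * R / δ⌋₊ + lam := by
  set N := ⌊2 * R / δ⌋₊
  by_contra! hk
  set c : ℕ → ℝ := fun i => max (a i) (a (i + 1))
  have hc_drop : ∀ t < N, c ((t + 2) * lam) < c (t * lam) - δ := fun t ht => by
    have : (t + 2) * lam + 1 ≤ k := by nlinarith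
    exact max_lt (hdrop _ (by nlinarith) _ (by nlinarith) (by nlinarith))
      (hdrop _ (by nlinarith) _ (by nlinarith) (by nlinarith))
  set s : ℕ → ℝ := fun t => c (t * lam) + c ((t + 1) * lam)
  have hs := sub_mul_le_of_forall_succ_le (s := s) (δ := δ) (n := N) fun t ht => by
    have := hc_drop t ht
    simp only [s, add_assoc, one_add_one_eq_two]
    linarith
  have hs₀ : s 0 ≤ 2 * R := by
    simp only [s, c, zero_mul, zero_add, one_mul]
    linarith [max_le (hR 0 (by omega)) (hR 1 (by omega)),
      max_le (hR lam (by omega)) (hR (lam + 1) (by omega))]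
  have hsN : 2 * δ < s N := by
    have := hpos (N * lam) (by nlinarith)
    have := hpos ((N + 1) * lam) (by nlinarith)
    simp only [s, c]
    linarith
  have hN : 2 * R < (N + 1) * δ := (div_lt_iff₀ hδ).1 (Nat.lt_floor_add_one _)
  linarith

section UniformConvexity

variable {B : Type*} [NormedAddCommGroup B] [NormedSpace ℝ B]

theorem norm_midpoint_lt_max_sub {ε r : ℝ}
    (huconv : ∀ x y : B, ‖x‖ ≤ ‖y‖ → ‖y‖ ≤ 1 → ε ≤ ‖x - y‖ → ‖(1 / 2 : ℝ) • (x + y)‖ < ‖y‖ - r)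
    {v w : B} (hv : ‖v‖ ≤ 1) (hw : ‖w‖ ≤ 1) (hvw : ε ≤ ‖v - w‖) :
    ‖(1 / 2 : ℝ) • (v + w)‖ < max ‖v‖ ‖w‖ - r := by
  rcases le_total ‖v‖ ‖w‖ with h | h
  · rw [max_eq_right h]
    exact huconv v w h hw hvw
  · rw [max_eq_left h, add_comm]
    exact huconv w v h hv (by rwa [norm_sub_rev])

theorem norm_le_norm_midpoint_add (T : B →ₗ[ℝ] B) (hT : ∀ z, ‖T z‖ ≤ ‖z‖) {v w z : B} {η : ℝ}
    (hv : ‖T v - z‖ ≤ η) (hw : ‖T w - z‖ ≤ η) : ‖z‖ ≤ ‖(1 / 2 : ℝ) • (v + w)‖ + η := by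
  have hmid : T ((1 / 2 : ℝ) • (v + w)) - z = (1 / 2 : ℝ) • ((T v - z) + (T w - z)) := by
    rw [map_smul, map_add]
    module
  have hclose : ‖T ((1 / 2 : ℝ) • (v + w)) - z‖ ≤ η := by
    rw [hmid, norm_smul, Real.norm_of_nonneg (by norm_num)]
    linarith [norm_add_le (T v - z) (T w - z)]
  calc ‖z‖ ≤ ‖T ((1 / 2 : ℝ) • (v + w))‖ + ‖T ((1 / 2 : ℝ) • (v + w)) - z‖ :=
        norm_le_norm_add_norm_sub _ z
    _ ≤ ‖(1 / 2 : ℝ) • (v + w)‖ + η := add_le_add (hT _) hclose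

theorem le_mul_floor_add_of_norm_apply_sub_le (T : ℕ → B →ₗ[ℝ] B) (hT : ∀ n z, ‖T n z‖ ≤ ‖z‖)
    {x : B} (hx : ‖x‖ ≤ 1) {ε r η : ℝ}
    (huconv : ∀ x y : B, ‖x‖ ≤ ‖y‖ → ‖y‖ ≤ 1 → ε ≤ ‖x - y‖ → ‖(1 / 2 : ℝ) • (x + y)‖ < ‖y‖ - r)
    (hη : 0 ≤ η) (hr : 2 * η < r) {lam : ℕ} (hlam : 1 ≤ lam)
    (hinv : ∀ q p, q + lam ≤ p → ‖T p (T q x) - T p x‖ ≤ 2 * η) {k : ℕ} {idx : ℕ → ℕ}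
    (hidx : ∀ i < k, idx i < idx (i + 1) ∧ ε ≤ ‖T (idx i) x - T (idx (i + 1)) x‖) :
    k ≤ lam * ⌊2 * ‖x‖ / (r - 2 * η)⌋₊ + lam := by
  have hmid : ∀ i < k, ‖(1 / 2 : ℝ) • (T (idx i) x + T (idx (i + 1)) x)‖ <
      max ‖T (idx i) x‖ ‖T (idx (i + 1)) x‖ - r := fun i hi =>
    norm_midpoint_lt_max_sub huconv ((hT _ x).trans hx) ((hT _ x).trans hx) (hidx i hi).2
  refine le_mul_floor_add_of_forall_lt_max_sub (by linarith) hlam (fun i _ => hT _ x)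
    (fun i hi => by linarith [(norm_nonneg _).trans_lt (hmid i hi)])
    fun i hi j hj hij => ?_
  have hsep : idx (i + 1) + lam ≤ idx j := by
    have := add_sub_le_of_forall_lt_succ (fun i hi => (hidx i hi).1) (by omega : i + 1 ≤ j) hj
    omega
  have := norm_le_norm_midpoint_add (T (idx j)) (hT _)
    (hinv (idx i) _ (by linarith [(hidx i hi).1])) (hinv _ _ hsep)
  linarith [hmid i hi]

end UniformConvexity

theorem stmt_18_general {G : Type*} [Group G] [TopologicalSpace G] [IsTopologicalGroup G]
    [SecondCountableTopology G]
    [MeasurableSpace G] [BorelSpace G]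
    (μ : Measure G) [μ.IsHaarMeasure]
    {B : Type*} [NormedAddCommGroup B] [NormedSpace ℝ B] [CompleteSpace B]
    (u : ℝ → ℝ)
    (huconv : ∀ ε : ℝ, 0 < ε → ∀ x y : B, ‖x‖ ≤ ‖y‖ → ‖y‖ ≤ 1 → ε ≤ ‖x - y‖ →
      ‖(1 / 2 : ℝ) • (x + y)‖ < ‖y‖ - u ε)
    (π : G →* (B →L[ℝ] B)) (hπ : ∀ g : G, ‖π g‖ ≤ 1)
    (hmeas : ∀ x : B, StronglyMeasurable fun g => π g x)
    (ε : ℝ) (hε : 0 < ε) (x : B) (hx0 : 0 < ‖x‖) (hx1 : ‖x‖ ≤ 1)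
    (η : ℝ) (hη0 : 0 < η) (hη : η < u ε / 2)
    (lam : ℕ) (hlam : 1 ≤ lam)
    (F : ℕ → Set G)
    (hFpos : ∀ n, 0 < μ (F n)) (hFfin : ∀ n, μ (F n) < ⊤)
    (hfast : ∀ k m : ℕ, k + lam ≤ m →
      ∃ F' ⊆ F k, MeasurableSet F' ∧
        μ (F k \ F') < ENNReal.ofReal (η / (3 * ‖x‖)) * μ (F k) ∧
        ∀ g ∈ F', μ (symmDiff (F m) (g • F m)) < ENNReal.ofReal (η / (3 * ‖x‖)) * μ (F m)) :
    ∀ (k : ℕ) (idx : ℕ → ℕ),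
      (∀ i < k, idx i < idx (i + 1) ∧
        ε ≤ ‖((μ (F (idx i))).toReal⁻¹ • ∫ g in F (idx i), π g⁻¹ x ∂μ) -
            ((μ (F (idx (i + 1)))).toReal⁻¹ • ∫ g in F (idx (i + 1)), π g⁻¹ x ∂μ)‖) →
      k ≤ lam * ⌊2 * ‖x‖ / (u ε - 2 * η)⌋₊ + lam := by
  intro k idx hidx
  have hF : ∀ n, μ (F n) ≠ ⊤ := fun n => (hFfin n).ne
  have hθ : 0 ≤ η / (3 * ‖x‖) := by positivity
  let T : ℕ → B →ₗ[ℝ] B := fun n =>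
    { toFun := ergodicAverage μ π (F n)
      map_add' := ergodicAverage_add hπ hmeas (hF n)
      map_smul' := ergodicAverage_smul (F n) }
  have hinv : ∀ q p, q + lam ≤ p → ‖T p (T q x) - T p x‖ ≤ 2 * η := fun q p hqp => by
    obtain ⟨F', -, hF', hbad, hgood⟩ := hfast q p hqp
    have := norm_ergodicAverage_ergodicAverage_sub_le hπ hmeas (hF p) (hF q) (hFpos q).ne' hF' hθ
      (measureReal_le_mul_of_lt_ofReal_mul hθ (hF q) hbad)
      (fun g hg => measureReal_le_mul_of_lt_ofReal_mul hθ (hF p) (hgood g hg)) x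
    calc _ ≤ 4 * (η / (3 * ‖x‖)) * ‖x‖ := this
      _ ≤ 2 * η := by field_simp; linarith
  exact le_mul_floor_add_of_norm_apply_sub_le T (fun n => norm_ergodicAverage_le hπ (F n)) hx1
    (huconv ε hε) hη0.le (by linarith) hlam hinv hidx

/-- Global fluctuation bound for `(λ, η/(3‖x‖))`-fast Følner sequences: any chain of `k`
many `ε`-fluctuations of the ergodic averages satisfies
`k ≤ λ·⌊2‖x‖/(u(ε) − 2η)⌋ + λ`. -/
theorem stmt_18 {G : Type*} [Group G] [TopologicalSpace G] [IsTopologicalGroup G]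
    [LocallyCompactSpace G] [SecondCountableTopology G]
    [MeasurableSpace G] [BorelSpace G]
    (μ : Measure G) [μ.IsHaarMeasure]
    {B : Type*} [NormedAddCommGroup B] [NormedSpace ℝ B] [CompleteSpace B]
    (u : ℝ → ℝ) (hupos : ∀ ε : ℝ, 0 < ε → 0 < u ε)
    (humono : ∀ a b : ℝ, 0 < a → a ≤ b → u a ≤ u b)
    (huconv : ∀ ε : ℝ, 0 < ε → ∀ x y : B, ‖x‖ ≤ ‖y‖ → ‖y‖ ≤ 1 → ε ≤ ‖x - y‖ →
      ‖(1 / 2 : ℝ) • (x + y)‖ < ‖y‖ - u ε)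
    (π : G →* (B →L[ℝ] B)) (hπ : ∀ g : G, ‖π g‖ ≤ 1)
    (hmeas : ∀ x : B, StronglyMeasurable fun g => π g x)
    (ε : ℝ) (hε : 0 < ε) (x : B) (hx0 : 0 < ‖x‖) (hx1 : ‖x‖ ≤ 1)
    (η : ℝ) (hη0 : 0 < η) (hη : η < u ε / 2)
    (lam : ℕ) (hlam : 1 ≤ lam)
    (F : ℕ → Set G) (hFcpt : ∀ n, IsCompact (F n))
    (hFpos : ∀ n, 0 < μ (F n)) (hFfin : ∀ n, μ (F n) < ⊤)
    (hfast : ∀ k m : ℕ, k + lam ≤ m →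
      ∃ F' ⊆ F k, MeasurableSet F' ∧
        μ (F k \ F') < ENNReal.ofReal (η / (3 * ‖x‖)) * μ (F k) ∧
        ∀ g ∈ F', μ (symmDiff (F m) (g • F m)) < ENNReal.ofReal (η / (3 * ‖x‖)) * μ (F m)) :
    ∀ (k : ℕ) (idx : ℕ → ℕ),
      (∀ i < k, idx i < idx (i + 1) ∧
        ε ≤ ‖((μ (F (idx i))).toReal⁻¹ • ∫ g in F (idx i), π g⁻¹ x ∂μ) -
            ((μ (F (idx (i + 1)))).toReal⁻¹ • ∫ g in F (idx (i + 1)), π g⁻¹ x ∂μ)‖) →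
      k ≤ lam * ⌊2 * ‖x‖ / (u ε - 2 * η)⌋₊ + lam :=
  stmt_18_general μ u huconv π hπ hmeas ε hε x hx0 hx1 η hη0 hη lam hlam F hFpos hFfin hfast
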